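/- arXiv:2306.01467 — 6 statements merged into one kernel-verified Lean document; each statement's English description precedes it below -/
import Mathlib

section
/- Let X be a Banach space, f ∈ S_{X*} a norm-one functional, and α > 0. Then the diameter of the slice S(B_X, f, α) = {x ∈ B_X : f(x) > 1 - α} equals the diameter of the weak-star slice S(B_{X**}, f, α) = {F ∈ B_{X**} : F(f) > 1 - α} of the bidual unit ball (under the canonical embedding of X into X**). -/
/-!
A point `F` of the bidual unit ball is approximated, on any finitely many functionals, by points
of `B_X`: otherwise a separating functional on `ℝⁿ` would pull back to some `h ∈ X*` bounded by
`u` on `B_X` but with `F h > u`, contradicting `‖F‖ ≤ 1`. Given `F, G` in the weak-star slice and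
a functional `g` nearly norming `F - G`, approximating both `F` and `G` on `f` and `g` yields
`x, y` in the slice with `g (x - y)` close to `(F - G) g`, so `‖F - G‖ ≤ diam S(B_X, f, α)`.
The converse inequality holds because the canonical embedding is an isometry into the bidual slice.
-/

open NormedSpace Metric

lemma StrongDual.norm_le_of_forall_apply_le {E : Type*} [NormedAddCommGroup E] [NormedSpace ℝ E]
    (h : StrongDual ℝ E) {u : ℝ} (hu : ∀ x, ‖x‖ ≤ 1 → h x ≤ u) : ‖h‖ ≤ u := by
  by_contra! hlt
  obtain ⟨x, hx, hux⟩ := h.exists_lt_apply_of_lt_opNorm hlt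
  rcases le_or_gt 0 (h x) with hpos | hneg
  · have := hu x hx.le
    rw [Real.norm_of_nonneg hpos] at hux
    linarith
  · have := hu (-x) (by rw [norm_neg]; exact hx.le)
    rw [Real.norm_of_nonpos hneg.le] at hux
    rw [map_neg] at this
    linarith

lemma StrongDual.apply_le_of_forall_apply_le {E : Type*} [NormedAddCommGroup E] [NormedSpace ℝ E]
    (F : StrongDual ℝ (StrongDual ℝ E)) (hF : ‖F‖ ≤ 1) (h : StrongDual ℝ E) {u : ℝ}
    (hu : ∀ x, ‖x‖ ≤ 1 → h x ≤ u) : F h ≤ u :=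
  calc F h ≤ ‖F h‖ := Real.le_norm_self _
    _ ≤ 1 * ‖h‖ := F.le_of_opNorm_le hF h
    _ ≤ u := by rw [one_mul]; exact h.norm_le_of_forall_apply_le hu

lemma apply_eq_sum_mul_single {ι : Type*} [Fintype ι] [DecidableEq ι] (φ : StrongDual ℝ (ι → ℝ))
    (v : ι → ℝ) : φ v = ∑ i, v i * φ (Pi.single i 1) := by
  conv_lhs => rw [pi_eq_sum_univ' v]
  simp [smul_eq_mul]

lemma bidual_apply_comp_pi {X ι : Type*} [NormedAddCommGroup X] [NormedSpace ℝ X] [Fintype ι]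
    (F : StrongDual ℝ (StrongDual ℝ X)) (g : ι → StrongDual ℝ X) (φ : StrongDual ℝ (ι → ℝ)) :
    F (φ.comp (ContinuousLinearMap.pi g)) = φ (fun i => F (g i)) := by
  classical
  have hcomp : φ.comp (ContinuousLinearMap.pi g) = ∑ i, φ (Pi.single i 1) • g i := by
    ext x
    rw [ContinuousLinearMap.comp_apply, apply_eq_sum_mul_single φ]
    simp [mul_comm]
  rw [hcomp, apply_eq_sum_mul_single φ]
  simp [mul_comm]

lemma bidual_apply_mem_closure_image_closedBall {X ι : Type*} [NormedAddCommGroup X]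
    [NormedSpace ℝ X] [Fintype ι] (F : StrongDual ℝ (StrongDual ℝ X)) (hF : ‖F‖ ≤ 1)
    (g : ι → StrongDual ℝ X) :
    (fun i => F (g i)) ∈ closure (ContinuousLinearMap.pi g '' closedBall 0 1) := by
  set T := ContinuousLinearMap.pi g
  by_contra hp
  obtain ⟨φ, u, hφu, huF⟩ := geometric_hahn_banach_closed_point
    ((convex_closedBall (0 : X) 1).linear_image T.toLinearMap).closure isClosed_closure hp
  have hball : ∀ x : X, ‖x‖ ≤ 1 → φ.comp T x ≤ u := fun x hx =>
    (hφu _ (subset_closure ⟨x, mem_closedBall_zero_iff.2 hx, rfl⟩)).le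
  have := F.apply_le_of_forall_apply_le hF _ hball
  rw [bidual_apply_comp_pi] at this
  linarith

lemma exists_norm_le_one_forall_abs_sub_lt {X ι : Type*} [NormedAddCommGroup X]
    [NormedSpace ℝ X] [Fintype ι] (F : StrongDual ℝ (StrongDual ℝ X)) (hF : ‖F‖ ≤ 1)
    (g : ι → StrongDual ℝ X) {ε : ℝ} (hε : 0 < ε) :
    ∃ x : X, ‖x‖ ≤ 1 ∧ ∀ i, |g i x - F (g i)| < ε := by
  obtain ⟨_, ⟨x, hx, rfl⟩, hdist⟩ :=
    mem_closure_iff.1 (bidual_apply_mem_closure_image_closedBall F hF g) ε hε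
  refine ⟨x, mem_closedBall_zero_iff.1 hx, fun i => ?_⟩
  rw [← Real.dist_eq, dist_comm]
  exact (dist_pi_lt_iff hε).1 hdist i

section Slice

variable {X : Type*} [NormedAddCommGroup X] [NormedSpace ℝ X] (f : StrongDual ℝ X) (c : ℝ)

lemma diam_slice_le_diam_bidual_slice :
    diam {x : X | ‖x‖ ≤ 1 ∧ c < f x} ≤
      diam {F : StrongDual ℝ (StrongDual ℝ X) | ‖F‖ ≤ 1 ∧ c < F f} := by
  set J := inclusionInDoubleDualLi ℝ (E := X)
  have himage : J '' {x : X | ‖x‖ ≤ 1 ∧ c < f x} ⊆ {F | ‖F‖ ≤ 1 ∧ c < F f} := by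
    rintro _ ⟨x, hx, rfl⟩
    exact ⟨(J.norm_map x).le.trans hx.1, hx.2⟩
  rw [← J.isometry.diam_image]
  exact diam_mono himage (isBounded_iff_forall_norm_le.2 ⟨1, fun _ hF => hF.1⟩)

lemma norm_sub_le_diam_slice {F G : StrongDual ℝ (StrongDual ℝ X)}
    (hF : ‖F‖ ≤ 1 ∧ c < F f) (hG : ‖G‖ ≤ 1 ∧ c < G f) :
    ‖F - G‖ ≤ diam {x : X | ‖x‖ ≤ 1 ∧ c < f x} := by
  refine le_of_forall_pos_le_add fun ε hε => (F - G).norm_le_of_forall_apply_le fun g hg => ?_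
  set δ := min (ε / 2) (min (F f - c) (G f - c))
  have hδ : 0 < δ := lt_min (half_pos hε) (lt_min (sub_pos.2 hF.2) (sub_pos.2 hG.2))
  obtain ⟨x, hx, hxF⟩ := exists_norm_le_one_forall_abs_sub_lt F hF.1 ![f, g] hδ
  obtain ⟨y, hy, hyG⟩ := exists_norm_le_one_forall_abs_sub_lt G hG.1 ![f, g] hδ
  simp only [Fin.forall_fin_two, Matrix.cons_val_zero, Matrix.cons_val_one, abs_lt] at hxF hyG
  have hδF : δ ≤ F f - c := (min_le_right _ _).trans (min_le_left _ _)
  have hδG : δ ≤ G f - c := (min_le_right _ _).trans (min_le_right _ _)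
  have hxy : ‖x - y‖ ≤ diam {x : X | ‖x‖ ≤ 1 ∧ c < f x} := by
    rw [← dist_eq_norm]
    exact dist_le_diam_of_mem (isBounded_iff_forall_norm_le.2 ⟨1, fun _ hz => hz.1⟩)
      ⟨hx, by linarith⟩ ⟨hy, by linarith⟩
  have hgxy : g x - g y ≤ ‖x - y‖ :=
    calc g x - g y = g (x - y) := (map_sub g x y).symm
      _ ≤ ‖g (x - y)‖ := Real.le_norm_self _
      _ ≤ 1 * ‖x - y‖ := g.le_of_opNorm_le hg _
      _ = ‖x - y‖ := one_mul _
  have hδε : δ ≤ ε / 2 := min_le_left _ _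
  rw [sub_apply]
  linarith

end Slice

theorem slice_diam_eq_bidual_slice_diam_general
    (X : Type*) [NormedAddCommGroup X] [NormedSpace ℝ X]
    (f : StrongDual ℝ X) (α : ℝ) :
    Metric.diam {x : X | ‖x‖ ≤ 1 ∧ f x > 1 - α} =
      Metric.diam {F : StrongDual ℝ (StrongDual ℝ X) | ‖F‖ ≤ 1 ∧ F f > 1 - α} :=
  le_antisymm (diam_slice_le_diam_bidual_slice f (1 - α)) <|
    diam_le_of_forall_dist_le diam_nonneg fun F hF G hG => by
      rw [dist_eq_norm F G]
      exact norm_sub_le_diam_slice f (1 - α) hF hG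

/-- For a Banach space `X`, a norm-one functional `f ∈ S_{X*}` and `α > 0`,
the diameter of the slice `S(B_X, f, α) = {x ∈ B_X : f(x) > 1 - α}` equals the diameter of
the weak-star slice `S(B_{X**}, f, α) = {F ∈ B_{X**} : F(f) > 1 - α}` of the bidual unit
ball. -/
theorem slice_diam_eq_bidual_slice_diam
    (X : Type*) [NormedAddCommGroup X] [NormedSpace ℝ X] [CompleteSpace X]
    (f : StrongDual ℝ X) (hf : ‖f‖ = 1) (α : ℝ) (hα : 0 < α) :
    Metric.diam {x : X | ‖x‖ ≤ 1 ∧ f x > 1 - α} =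
      Metric.diam {F : StrongDual ℝ (StrongDual ℝ X) | ‖F‖ ≤ 1 ∧ F f > 1 - α} :=
  slice_diam_eq_bidual_slice_diam_general X f α
end

section
/- Let X be a Banach space, f ∈ S_{X*}, and α > 0. Define the radius r(S) of a slice S as inf{r > 0 : S ⊆ B(x, r) for some x ∈ X}. Then r(S(B_X, f, α)) ≥ r(S(B_{X**}, f, α)), where the second slice is taken in the bidual unit ball with center allowed to range over X**. -/
/-!
For `‖F‖ ≤ 1` in the bidual and two functionals `f, g`, separating the point `(F f, F g)` from
the convex image of `B_X` under `x ↦ (f x, g x)` would produce a functional `h = φ ∘ (f, g)` with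
`F h > sup_{B_X} h = ‖h‖`; so `(F f, F g)` is a limit of pairs `(f x, g x)` with `‖x‖ ≤ 1`.
Consequently, if the slice `S(B_X, f, α)` lies in `B(x₀, r)`, then for `F` in the bidual slice
and any `g` we find `x` in the slice with `g x` close to `F g`, whence `F g - g x₀ ≤ r ‖g‖`:
the bidual slice lies in `B(x₀, r)` inside `X**`.
-/

open NormedSpace Metric

/-- The radius of a bounded set `S` in a normed space `Y`:
`r(S) = inf {r > 0 : S ⊆ B(y, r) for some y ∈ Y}` (closed balls). -/
noncomputable def sliceRadius {Y : Type*} [NormedAddCommGroup Y] (S : Set Y) : ℝ :=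
  sInf {r : ℝ | 0 < r ∧ ∃ y : Y, S ⊆ Metric.closedBall y r}

lemma sliceRadius_le_of_forall_cover {Y Z : Type*} [NormedAddCommGroup Y] [NormedAddCommGroup Z]
    {T : Set Z} {S : Set Y} (hS : Bornology.IsBounded S)
    (h : ∀ r > 0, ∀ y, S ⊆ closedBall y r → ∃ z, T ⊆ closedBall z r) :
    sliceRadius T ≤ sliceRadius S := by
  obtain ⟨R, hR⟩ := hS.subset_closedBall 0
  refine csInf_le_csInf ⟨0, fun r hr => hr.1.le⟩ ⟨max R 1, by positivity, 0, ?_⟩ ?_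
  · exact hR.trans (closedBall_subset_closedBall (le_max_left _ _))
  · rintro r ⟨hr, y, hy⟩
    exact ⟨hr, h r hr y hy⟩

namespace ContinuousLinearMap

lemma norm_le_of_forall_apply_le {E : Type*} [NormedAddCommGroup E] [NormedSpace ℝ E]
    (h : StrongDual ℝ E) {u : ℝ} (hu : 0 ≤ u) (hle : ∀ x, ‖x‖ ≤ 1 → h x ≤ u) : ‖h‖ ≤ u := by
  refine opNorm_le_of_unit_norm hu fun x hx => abs_le.2 ⟨?_, hle x hx.le⟩
  have := hle (-x) (by rw [norm_neg, hx])
  rw [map_neg] at this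
  linarith

lemma apply_comp_prod {E : Type*} [NormedAddCommGroup E] [NormedSpace ℝ E]
    (F : StrongDual ℝ (StrongDual ℝ E)) (f g : StrongDual ℝ E) (φ : StrongDual ℝ (ℝ × ℝ)) :
    F (φ.comp (f.prod g)) = φ (F f, F g) := by
  have hφ : ∀ p : ℝ × ℝ, φ p = p.1 * φ (1, 0) + p.2 * φ (0, 1) := by
    intro p
    rw [← smul_eq_mul, ← smul_eq_mul, ← map_smul, ← map_smul, ← map_add]
    simp
  have hcomp : φ.comp (f.prod g) = φ (1, 0) • f + φ (0, 1) • g := by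
    ext x
    simp [hφ (f x, g x), mul_comm]
  simp [hcomp, hφ (F f, F g), mul_comm]

end ContinuousLinearMap

open ContinuousLinearMap

lemma mem_closure_image_closedBall_of_norm_le_one {X : Type*} [NormedAddCommGroup X]
    [NormedSpace ℝ X] {F : StrongDual ℝ (StrongDual ℝ X)} (hF : ‖F‖ ≤ 1) (f g : StrongDual ℝ X) :
    (F f, F g) ∈ closure (f.prod g '' closedBall 0 1) := by
  have hconv : Convex ℝ (f.prod g '' closedBall (0 : X) 1) :=
    (convex_closedBall 0 1).linear_image (f.prod g : X →ₗ[ℝ] ℝ × ℝ)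
  by_contra hnot
  obtain ⟨φ, u, hφu, huφ⟩ :=
    geometric_hahn_banach_closed_point hconv.closure isClosed_closure hnot
  set h := φ.comp (f.prod g)
  have hle : ∀ x : X, ‖x‖ ≤ 1 → h x ≤ u := fun x hx =>
    (hφu _ (subset_closure ⟨x, by simpa using hx, rfl⟩)).le
  have hu : 0 ≤ u := by simpa using hle 0 (by simp)
  have : F h ≤ u := calc
    F h ≤ ‖F‖ * ‖h‖ := (le_abs_self _).trans (F.le_opNorm h)
    _ ≤ 1 * u := mul_le_mul hF (h.norm_le_of_forall_apply_le hu hle) (norm_nonneg _) zero_le_one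
    _ = u := one_mul u
  rw [apply_comp_prod] at this
  linarith

section Slice

variable {X : Type*} [NormedAddCommGroup X] [NormedSpace ℝ X] {f : StrongDual ℝ X} {α r : ℝ}
  {x₀ : X} {F : StrongDual ℝ (StrongDual ℝ X)}

lemma apply_sub_le_of_slice_subset_closedBall
    (hcov : {x : X | ‖x‖ ≤ 1 ∧ f x > 1 - α} ⊆ closedBall x₀ r) (hF : ‖F‖ ≤ 1)
    (hFf : F f > 1 - α) (g : StrongDual ℝ X) : F g - g x₀ ≤ r * ‖g‖ := by
  by_contra! hlt
  have hopen : IsOpen {p : ℝ × ℝ | 1 - α < p.1 ∧ g x₀ + r * ‖g‖ < p.2} :=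
    (isOpen_lt continuous_const continuous_fst).inter (isOpen_lt continuous_const continuous_snd)
  obtain ⟨_, ⟨hfx, hgx⟩, x, hx, rfl⟩ :=
    mem_closure_iff.1 (mem_closure_image_closedBall_of_norm_le_one hF f g) _ hopen
      ⟨hFf, by linarith⟩
  have hxx₀ : ‖x - x₀‖ ≤ r := mem_closedBall_iff_norm.1 (hcov ⟨by simpa using hx, hfx⟩)
  have : g x - g x₀ ≤ r * ‖g‖ := calc
    g x - g x₀ = g (x - x₀) := (map_sub g x x₀).symm
    _ ≤ ‖g‖ * ‖x - x₀‖ := (le_abs_self _).trans (g.le_opNorm _)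
    _ ≤ r * ‖g‖ := by rw [mul_comm]; gcongr
  simp only [prod_apply] at hgx
  linarith

lemma bidual_slice_subset_closedBall_of_slice_subset
    (hcov : {x : X | ‖x‖ ≤ 1 ∧ f x > 1 - α} ⊆ closedBall x₀ r) (hr : 0 ≤ r) :
    {F : StrongDual ℝ (StrongDual ℝ X) | ‖F‖ ≤ 1 ∧ F f > 1 - α} ⊆
      closedBall (inclusionInDoubleDual ℝ X x₀) r := by
  rintro F ⟨hF, hFf⟩
  rw [mem_closedBall, dist_eq_norm F]
  refine opNorm_le_bound _ hr fun g => abs_le.2 ⟨?_, ?_⟩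
  · have := apply_sub_le_of_slice_subset_closedBall hcov hF hFf (-g)
    simp only [map_neg, norm_neg, neg_apply] at this
    simp only [sub_apply, dual_def]
    linarith
  · simpa only [sub_apply, dual_def] using apply_sub_le_of_slice_subset_closedBall hcov hF hFf g

end Slice

theorem slice_radius_ge_bidual_slice_radius_general
    (X : Type*) [NormedAddCommGroup X] [NormedSpace ℝ X]
    (f : StrongDual ℝ X) (α : ℝ) :
    sliceRadius {F : StrongDual ℝ (StrongDual ℝ X) | ‖F‖ ≤ 1 ∧ F f > 1 - α} ≤
      sliceRadius {x : X | ‖x‖ ≤ 1 ∧ f x > 1 - α} := by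
  have hbdd : Bornology.IsBounded {x : X | ‖x‖ ≤ 1 ∧ f x > 1 - α} :=
    isBounded_closedBall.subset fun x hx => mem_closedBall_zero_iff.2 hx.1
  exact sliceRadius_le_of_forall_cover hbdd fun r hr x₀ hcov =>
    ⟨_, bidual_slice_subset_closedBall_of_slice_subset hcov hr.le⟩

/-- For a Banach space `X`, `f ∈ S_{X*}` and `α > 0`, the radius of the
slice `S(B_X, f, α)` (centers in `X`) is at least the radius of the bidual slice
`S(B_{X**}, f, α)` (centers in `X**`). -/
theorem slice_radius_ge_bidual_slice_radius
    (X : Type*) [NormedAddCommGroup X] [NormedSpace ℝ X] [CompleteSpace X]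
    (f : StrongDual ℝ X) (hf : ‖f‖ = 1) (α : ℝ) (hα : 0 < α) :
    sliceRadius {F : StrongDual ℝ (StrongDual ℝ X) | ‖F‖ ≤ 1 ∧ F f > 1 - α} ≤
      sliceRadius {x : X | ‖x‖ ≤ 1 ∧ f x > 1 - α} :=
  slice_radius_ge_bidual_slice_radius_general X f α
end

section
/- Let (X_n)_{n≥1} be a sequence of Banach spaces such that d(X_n) ≤ 1 + 1/n for all n, where d(Y) := inf over slices S of B_Y of diam(S). Let X = (⊕_{n=1}^∞ X_n)_{ℓ1} be the ℓ1-sum. Then d(X) = inf over slices of B_X of their diameter satisfies d(X) ≤ 1, i.e., for every ε > 0 there is a slice of B_X of diameter less than 1 + ε. -/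
open NormedSpace Metric

instance : Fact ((1 : ENNReal) ≤ 1) := ⟨le_rfl⟩

section aux

variable (X : ℕ → Type*) [∀ n, NormedAddCommGroup (X n)] [∀ n, NormedSpace ℝ (X n)]

lemma lp_one_coord_le (x : lp X 1) (n : ℕ) : ‖x n‖ ≤ ‖x‖ :=
  lp.norm_apply_le_norm one_ne_zero x n

lemma lp_one_tail (x : lp X 1) (n : ℕ) :
    ‖x - lp.single 1 n (x n)‖ = ‖x‖ - ‖x n‖ := by
  have h := lp.norm_compl_sum_single (p := 1) (E := X) (by norm_num) x {n}
  simpa using h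

lemma lp_single_sub (n : ℕ) (a b : X n) :
    lp.single (E := X) 1 n (a - b) = lp.single 1 n a - lp.single 1 n b := by
  apply lp.ext
  funext j
  by_cases hj : j = n
  · subst hj
    simp [lp.coeFn_sub, lp.single_apply_self]
  · simp [lp.coeFn_sub, lp.single_apply_ne _ _ _ hj]

end aux

set_option maxHeartbeats 1000000

/-- If `(X_n)_{n ≥ 1}` are Banach spaces with `d(X_n) ≤ 1 + 1/n`
(where `d(Y)` is the infimum of diameters of slices of `B_Y`), then the `ℓ₁`-sum
`X = (⊕ X_n)_{ℓ₁}` satisfies `d(X) ≤ 1`: for every `ε > 0` there is a slice of `B_X`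
of diameter less than `1 + ε`. -/
theorem ell1_sum_small_slices
    (X : ℕ → Type*) [∀ n, NormedAddCommGroup (X n)] [∀ n, NormedSpace ℝ (X n)]
    [∀ n, CompleteSpace (X n)]
    (h : ∀ n : ℕ, 0 < n → ∀ η : ℝ, 0 < η →
      ∃ (f : StrongDual ℝ (X n)) (α : ℝ), ‖f‖ = 1 ∧ 0 < α ∧
        Metric.diam {x : X n | ‖x‖ ≤ 1 ∧ f x > 1 - α} < 1 + 1 / (n : ℝ) + η) :
    ∀ ε : ℝ, 0 < ε →
      ∃ (F : StrongDual ℝ (lp X 1)) (α : ℝ), ‖F‖ = 1 ∧ 0 < α ∧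
        Metric.diam {x : lp X 1 | ‖x‖ ≤ 1 ∧ F x > 1 - α} < 1 + ε := by
  intro ε hε
  -- choose n with 1/n < ε/4
  obtain ⟨n, hn⟩ := exists_nat_one_div_lt (show (0:ℝ) < ε/4 by linarith)
  set m := n + 1 with hm
  have hmpos : 0 < m := Nat.succ_pos n
  have hminv : 1 / (m : ℝ) < ε / 4 := by
    have h1 : (1:ℝ) / (m : ℝ) ≤ 1 / (n + 1 : ℝ) := by
      simp [hm]
    exact lt_of_le_of_lt h1 hn
  obtain ⟨f, α, hf1, hα, hdiam⟩ := h m hmpos (ε/4) (by linarith)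
  set α' := min α (ε/8) with hα'
  have hα'pos : 0 < α' := lt_min hα (by linarith)
  have hα'le : α' ≤ α := min_le_left _ _
  have hα'le' : α' ≤ ε/8 := min_le_right _ _
  -- the projection onto coordinate m composed with f
  let F : StrongDual ℝ (lp X 1) := LinearMap.mkContinuous
    { toFun := fun x => f (x m)
      map_add' := fun x y => by simp
      map_smul' := fun c x => by simp }
    1 (fun x => by
      simpa [hf1] using
        (f.le_opNorm (x m)).trans (by
          simpa [hf1] using lp_one_coord_le X x m))
  have hFapp : ∀ x : lp X 1, F x = f (x m) := fun x => rfl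
  have hFnorm : ‖F‖ = 1 := by
    apply le_antisymm
    · exact LinearMap.mkContinuous_norm_le _ zero_le_one _
    · rw [← hf1]
      apply f.opNorm_le_bound (norm_nonneg F)
      intro y
      have h2 : ‖F (lp.single 1 m y)‖ ≤ ‖F‖ * ‖lp.single 1 m y‖ := F.le_opNorm _
      have h3 : lp.single 1 m y m = y := lp.single_apply_self 1 m y
      have h4 : ‖lp.single (E := X) 1 m y‖ = ‖y‖ := by
        have := lp.norm_single (p := 1) (E := X) (by norm_num)
          m y
        simpa using lp.norm_single (p := 1) (E := X) (by norm_num) m y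
      rw [hFapp, h3] at h2
      rwa [h4] at h2
  refine ⟨F, α', hFnorm, hα'pos, ?_⟩
  -- diameter estimate
  have hD : Metric.diam {x : X m | ‖x‖ ≤ 1 ∧ f x > 1 - α} < 1 + ε/2 := by
    have : 1 + 1/(m:ℝ) + ε/4 < 1 + ε/2 := by linarith
    linarith
  have hDnn : 0 ≤ Metric.diam {x : X m | ‖x‖ ≤ 1 ∧ f x > 1 - α} := Metric.diam_nonneg
  apply lt_of_le_of_lt (Metric.diam_le_of_forall_dist_le
    (by positivity : (0:ℝ) ≤ Metric.diam {x : X m | ‖x‖ ≤ 1 ∧ f x > 1 - α} + 2 * α') ?_)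
  · linarith
  · intro x hx y hy
    obtain ⟨hx1, hx2⟩ := hx
    obtain ⟨hy1, hy2⟩ := hy
    rw [hFapp] at hx2 hy2
    -- coordinates in the small slice
    have hxm : (x m) ∈ {z : X m | ‖z‖ ≤ 1 ∧ f z > 1 - α} :=
      ⟨(lp_one_coord_le X x m).trans hx1, lt_of_le_of_lt (by linarith) hx2⟩
    have hym : (y m) ∈ {z : X m | ‖z‖ ≤ 1 ∧ f z > 1 - α} :=
      ⟨(lp_one_coord_le X y m).trans hy1, lt_of_le_of_lt (by linarith) hy2⟩
    have hbdd : Bornology.IsBounded {z : X m | ‖z‖ ≤ 1 ∧ f z > 1 - α} := by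
      apply Bornology.IsBounded.subset (Metric.isBounded_closedBall (x := (0 : X m)) (r := 1))
      intro z hz
      simpa [Metric.mem_closedBall, dist_zero_right] using hz.1
    have hcoord : dist (x m) (y m) ≤ Metric.diam {z : X m | ‖z‖ ≤ 1 ∧ f z > 1 - α} :=
      Metric.dist_le_diam_of_mem hbdd hxm hym
    -- coordinates are large: ‖x m‖ > 1 - α'
    have hxml : 1 - α' < ‖x m‖ := by
      have := f.le_opNorm (x m)
      rw [hf1, one_mul] at this
      calc 1 - α' < F x := hx2
        _ = f (x m) := hFapp x
        _ ≤ ‖f (x m)‖ := le_abs_self _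
        _ ≤ ‖x m‖ := this
    have hyml : 1 - α' < ‖y m‖ := by
      have := f.le_opNorm (y m)
      rw [hf1, one_mul] at this
      calc 1 - α' < F y := hy2
        _ = f (y m) := hFapp y
        _ ≤ ‖f (y m)‖ := le_abs_self _
        _ ≤ ‖y m‖ := this
    -- tail estimates
    have hxt : ‖x - lp.single 1 m (x m)‖ ≤ α' := by
      rw [lp_one_tail]; linarith
    have hyt : ‖y - lp.single 1 m (y m)‖ ≤ α' := by
      rw [lp_one_tail]; linarith
    -- assemble
    have hdecomp : x - y = lp.single 1 m (x m - y m)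
        + (x - lp.single 1 m (x m)) - (y - lp.single 1 m (y m)) := by
      rw [lp_single_sub]; abel
    have hsing : ‖lp.single (E := X) 1 m (x m - y m)‖ = ‖x m - y m‖ := by
      simpa using lp.norm_single (p := 1) (E := X) (by norm_num)
        m (x m - y m)
    calc dist x y = ‖x - y‖ := dist_eq_norm x y
      _ ≤ ‖lp.single 1 m (x m - y m) + (x - lp.single 1 m (x m))‖
          + ‖y - lp.single 1 m (y m)‖ := by rw [hdecomp]; exact norm_sub_le _ _
      _ ≤ ‖lp.single (E := X) 1 m (x m - y m)‖ + ‖x - lp.single 1 m (x m)‖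
          + ‖y - lp.single 1 m (y m)‖ := by
            gcongr; exact norm_add_le _ _
      _ = ‖x m - y m‖ + ‖x - lp.single 1 m (x m)‖ + ‖y - lp.single 1 m (y m)‖ := by
            rw [hsing]
      _ ≤ Metric.diam {z : X m | ‖z‖ ≤ 1 ∧ f z > 1 - α} + α' + α' := by
            have : ‖x m - y m‖ = dist (x m) (y m) := (dist_eq_norm _ _).symm
            rw [this]; gcongr
      _ ≤ Metric.diam {z : X m | ‖z‖ ≤ 1 ∧ f z > 1 - α} + 2 * α' := by linarith
end

section
/- Let X = (⊕_{n=1}^∞ X_n)_{ℓ1} be an ℓ1-sum of Banach spaces, let n ∈ ℕ, x_n* ∈ S_{X_n*}, and α > 0. Consider the slice S of B_X defined by the functional f(x_k) := x_n*(x_n). Then for any (x_k), (y_k) ∈ S one has ‖(x_k) - (y_k)‖ ≤ diam(S(B_{X_n}, x_n*, α)) + 2α. In particular diam(S) ≤ diam(S(B_{X_n}, x_n*, α)) + 2α. -/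
open NormedSpace Metric

/-! In the `ℓ¹`-sum, `‖x‖ + ‖y‖ - ‖x - y‖` is a sum of nonnegative coordinate terms, so it
dominates its `n`-th term. For `x, y` in the slice, `‖x‖ - ‖x n‖ < α` and the same for `y`,
because `1 - α < g (x n) ≤ ‖x n‖`; hence `‖x - y‖ ≤ ‖x n - y n‖ + 2α`, and `x n, y n` lie in the
slice of `B_{X_n}` cut out by `g`. -/

/-- The slice `S(B_E, g, α)` of the closed unit ball. -/
def slice {E : Type*} [NormedAddCommGroup E] [NormedSpace ℝ E] (g : StrongDual ℝ E) (α : ℝ) :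
    Set E :=
  {z | ‖z‖ ≤ 1 ∧ g z > 1 - α}

theorem isBounded_slice {E : Type*} [NormedAddCommGroup E] [NormedSpace ℝ E]
    (g : StrongDual ℝ E) (α : ℝ) : Bornology.IsBounded (slice g α) :=
  (isBounded_closedBall (x := (0 : E)) (r := 1)).subset fun _ hz ↦ mem_closedBall_zero_iff.2 hz.1

theorem lt_norm_of_mem_slice {E : Type*} [NormedAddCommGroup E] [NormedSpace ℝ E]
    {g : StrongDual ℝ E} (hg : ‖g‖ ≤ 1) {α : ℝ} {z : E} (hz : z ∈ slice g α) : 1 - α < ‖z‖ :=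
  calc 1 - α < g z := hz.2
    _ ≤ ‖g z‖ := le_abs_self _
    _ ≤ 1 * ‖z‖ := g.le_of_opNorm_le hg z
    _ = ‖z‖ := one_mul _

namespace lp

variable {ι : Type*} {E : ι → Type*} [∀ i, NormedAddCommGroup (E i)]

theorem norm_eq_tsum_of_one (x : lp E 1) : ‖x‖ = ∑' i, ‖x i‖ := by
  simpa using norm_eq_tsum_rpow (p := 1) (by norm_num) x

theorem summable_norm_of_one (x : lp E 1) : Summable fun i ↦ ‖x i‖ := by
  simpa using (lp.memℓp x).summable (p := 1) (by norm_num)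

theorem norm_sub_le_norm_sub_apply_add_of_one (x y : lp E 1) (i : ι) :
    ‖x - y‖ ≤ ‖x i - y i‖ + (‖x‖ - ‖x i‖) + (‖y‖ - ‖y i‖) := by
  have hx := summable_norm_of_one x
  have hy := summable_norm_of_one y
  have hxy := summable_norm_of_one (x - y)
  have hdefect : ∑' k, (‖x k‖ + ‖y k‖ - ‖(x - y) k‖) = ‖x‖ + ‖y‖ - ‖x - y‖ := by
    rw [(hx.add hy).tsum_sub hxy, hx.tsum_add hy, norm_eq_tsum_of_one x, norm_eq_tsum_of_one y,
      norm_eq_tsum_of_one (x - y)]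
  have := ((hx.add hy).sub hxy).le_tsum i fun k _ ↦ by
    simp only [coeFn_sub, Pi.sub_apply]
    linarith [norm_sub_le (x k) (y k)]
  rw [hdefect, coeFn_sub, Pi.sub_apply] at this
  linarith

theorem norm_sub_le_diam_slice_add_of_one [∀ i, NormedSpace ℝ (E i)] {i : ι}
    {g : StrongDual ℝ (E i)} (hg : ‖g‖ ≤ 1) {α : ℝ} {x y : lp E 1} (hx : ‖x‖ ≤ 1) (hy : ‖y‖ ≤ 1)
    (hgx : g (x i) > 1 - α) (hgy : g (y i) > 1 - α) :
    ‖x - y‖ ≤ diam (slice g α) + 2 * α := by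
  have hxi : x i ∈ slice g α := ⟨(norm_apply_le_norm one_ne_zero x i).trans hx, hgx⟩
  have hyi : y i ∈ slice g α := ⟨(norm_apply_le_norm one_ne_zero y i).trans hy, hgy⟩
  have hdist : ‖x i - y i‖ ≤ diam (slice g α) :=
    dist_eq_norm (x i) (y i) ▸ dist_le_diam_of_mem (isBounded_slice g α) hxi hyi
  linarith [norm_sub_le_norm_sub_apply_add_of_one x y i, lt_norm_of_mem_slice hg hxi,
    lt_norm_of_mem_slice hg hyi]

end lp

theorem ell1_sum_slice_diam_estimate_general
    (X : ℕ → Type*) [∀ k, NormedAddCommGroup (X k)] [∀ k, NormedSpace ℝ (X k)]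
    (n : ℕ) (g : StrongDual ℝ (X n)) (hg : ‖g‖ = 1) (α : ℝ) (hα : 0 < α) :
    (∀ x y : lp X 1, ‖x‖ ≤ 1 → ‖y‖ ≤ 1 → g (x n) > 1 - α → g (y n) > 1 - α →
      ‖x - y‖ ≤ Metric.diam {z : X n | ‖z‖ ≤ 1 ∧ g z > 1 - α} + 2 * α) ∧
    Metric.diam {x : lp X 1 | ‖x‖ ≤ 1 ∧ g (x n) > 1 - α} ≤
      Metric.diam {z : X n | ‖z‖ ≤ 1 ∧ g z > 1 - α} + 2 * α := by
  have key (x y : lp X 1) := lp.norm_sub_le_diam_slice_add_of_one hg.le (α := α) (x := x) (y := y)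
  refine ⟨key, diam_le_of_forall_dist_le (by positivity) fun x hx y hy ↦ ?_⟩
  rw [dist_eq_norm]
  exact key x y hx.1 hy.1 hx.2 hy.2

/-- Let `X = (⊕ X_k)_{ℓ₁}`, `n ∈ ℕ`, `g = x_n* ∈ S_{X_n*}`, `α > 0`, and
consider the slice `S` of `B_X` given by the functional `(x_k) ↦ x_n*(x_n)`. Then any two
elements `(x_k), (y_k) ∈ S` satisfy `‖(x_k) - (y_k)‖ ≤ diam S(B_{X_n}, x_n*, α) + 2α`;
in particular `diam S ≤ diam S(B_{X_n}, x_n*, α) + 2α`. -/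
theorem ell1_sum_slice_diam_estimate
    (X : ℕ → Type*) [∀ k, NormedAddCommGroup (X k)] [∀ k, NormedSpace ℝ (X k)]
    [∀ k, CompleteSpace (X k)]
    (n : ℕ) (g : StrongDual ℝ (X n)) (hg : ‖g‖ = 1) (α : ℝ) (hα : 0 < α) :
    (∀ x y : lp X 1, ‖x‖ ≤ 1 → ‖y‖ ≤ 1 → g (x n) > 1 - α → g (y n) > 1 - α →
      ‖x - y‖ ≤ Metric.diam {z : X n | ‖z‖ ≤ 1 ∧ g z > 1 - α} + 2 * α) ∧
    Metric.diam {x : lp X 1 | ‖x‖ ≤ 1 ∧ g (x n) > 1 - α} ≤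
      Metric.diam {z : X n | ‖z‖ ≤ 1 ∧ g z > 1 - α} + 2 * α :=
  ell1_sum_slice_diam_estimate_general X n g hg α hα
end

section
/- Let X be a Banach space, x_0 ∈ S_X, f ∈ S_{X*} with f(x_0) = 1, δ > 0, and B_δ := closed convex hull of B_X ∪ {(1+δ)x_0} ∪ {-(1+δ)x_0}. Then for every 0 < r < δ, the set {z ∈ B_δ : f(z) > 1 + δ - r} has diameter at most 3r(1+δ)/δ. -/
open NormedSpace Metric

/-- `B_δ`: the closed convex hull of `B_X ∪ {(1+δ)x₀} ∪ {-(1+δ)x₀}`. -/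
noncomputable def Bdelta {X : Type*} [NormedAddCommGroup X] [NormedSpace ℝ X]
    (x₀ : X) (δ : ℝ) : Set X :=
  closure (convexHull ℝ (Metric.closedBall (0 : X) 1 ∪ {(1 + δ) • x₀, -((1 + δ) • x₀)}))

/-!
Every point of `co(B_X ∪ {±p})` is `u + b p` with `‖u‖ + |b| ≤ 1`. Writing `t = 1 - b`, a point
with `f z ≥ ‖p‖ - r` satisfies `z - p = u - t p` with `‖u‖ ≤ t` and `t (‖p‖ - 1) ≤ r`, since
`f u ≤ ‖u‖ ≤ t`. Two such points are then at distance at most `t + t' + |t - t'| ‖p‖`, which is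
at most `(1 + ‖p‖) r / (‖p‖ - 1)`; for `p = (1 + δ) x₀` this is `(2 + δ) r / δ ≤ 3 r (1 + δ) / δ`.
The open slice of the closed hull lies in the closure of the slice of the hull, which has the
same diameter.
-/

theorem Metric.diam_le_of_subset_closure {α : Type*} [PseudoMetricSpace α] {s t : Set α}
    {C : ℝ} (hst : s ⊆ closure t) (hC : 0 ≤ C) (h : ∀ x ∈ t, ∀ y ∈ t, dist x y ≤ C) :
    diam s ≤ C :=
  calc diam s ≤ diam (closure t) := diam_mono hst (isBounded_iff.2 ⟨C, h⟩).closure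
    _ = diam t := diam_closure t
    _ ≤ C := diam_le_of_forall_dist_le hC h

section

variable {E : Type*} [NormedAddCommGroup E] [NormedSpace ℝ E]

theorem convexHull_closedBall_union_pair_subset (p : E) :
    convexHull ℝ (closedBall (0 : E) 1 ∪ {p, -p}) ⊆
      {z | ∃ (u : E) (b : ℝ), ‖u‖ + |b| ≤ 1 ∧ u + b • p = z} := by
  refine convexHull_min ?_ ?_
  · rintro y (hy | rfl | rfl)
    · exact ⟨y, 0, by simpa using hy, by simp⟩
    · exact ⟨0, 1, by simp, by simp⟩
    · exact ⟨0, -1, by simp, by simp⟩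
  · rintro _ ⟨u, b, hub, rfl⟩ _ ⟨u', b', hub', rfl⟩ θ θ' hθ hθ' hθθ'
    refine ⟨θ • u + θ' • u', θ * b + θ' * b', ?_, by module⟩
    calc ‖θ • u + θ' • u'‖ + |θ * b + θ' * b'|
        ≤ (θ * ‖u‖ + θ' * ‖u'‖) + (θ * |b| + θ' * |b'|) := by
          gcongr
          · exact (norm_add_le _ _).trans_eq <| by
              rw [norm_smul_of_nonneg hθ, norm_smul_of_nonneg hθ']
          · exact (abs_add_le _ _).trans_eq <| by
              rw [abs_mul, abs_mul, abs_of_nonneg hθ, abs_of_nonneg hθ']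
      _ = θ * (‖u‖ + |b|) + θ' * (‖u'‖ + |b'|) := by ring
      _ ≤ θ * 1 + θ' * 1 := by gcongr
      _ = 1 := by rw [mul_one, mul_one, hθθ']

theorem exists_sub_eq_sub_smul_of_mem_convexHull_of_le_apply {p z : E} {f : StrongDual ℝ E}
    {r : ℝ} (hf : ‖f‖ ≤ 1) (hfp : f p = ‖p‖)
    (hz : z ∈ convexHull ℝ (closedBall (0 : E) 1 ∪ {p, -p})) (hfz : ‖p‖ - r ≤ f z) :
    ∃ (u : E) (t : ℝ), ‖u‖ ≤ t ∧ t * (‖p‖ - 1) ≤ r ∧ z - p = u - t • p := by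
  obtain ⟨u, b, hub, rfl⟩ := convexHull_closedBall_union_pair_subset p hz
  have hfu : f u ≤ ‖u‖ := (le_abs_self _).trans <| (f.le_opNorm u).trans <|
    mul_le_of_le_one_left (norm_nonneg u) hf
  have hb : b ≤ |b| := le_abs_self b
  have hfz' : ‖p‖ - r ≤ f u + b * ‖p‖ := by simpa [hfp] using hfz
  exact ⟨u, 1 - b, by linarith, by linarith, by module⟩

theorem norm_sub_sub_smul_sub_le {u u' p : E} {t t' m : ℝ} (hp : 1 ≤ ‖p‖)
    (hu : ‖u‖ ≤ t) (hu' : ‖u'‖ ≤ t') (ht : t ≤ m) (ht' : t' ≤ m) :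
    ‖(u - t • p) - (u' - t' • p)‖ ≤ m * (1 + ‖p‖) :=
  calc ‖(u - t • p) - (u' - t' • p)‖ = ‖(u - u') + (t' - t) • p‖ := by congr 1; module
    _ ≤ ‖u‖ + ‖u'‖ + |t' - t| * ‖p‖ := by
      grw [norm_add_le, norm_sub_le, norm_smul, Real.norm_eq_abs]
    _ ≤ m * (1 + ‖p‖) := by
      have ht₀ : 0 ≤ t := (norm_nonneg u).trans hu
      have ht₀' : 0 ≤ t' := (norm_nonneg u').trans hu'
      rcases le_total t t' with htt' | htt'
      · rw [abs_of_nonneg (sub_nonneg.2 htt')]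
        nlinarith [mul_nonneg ht₀ (sub_nonneg.2 hp)]
      · rw [abs_of_nonpos (sub_nonpos.2 htt')]
        nlinarith [mul_nonneg ht₀' (sub_nonneg.2 hp)]

theorem dist_le_of_mem_convexHull_of_le_apply {p z w : E} {f : StrongDual ℝ E} {r : ℝ}
    (hp : 1 < ‖p‖) (hf : ‖f‖ ≤ 1) (hfp : f p = ‖p‖)
    (hz : z ∈ convexHull ℝ (closedBall (0 : E) 1 ∪ {p, -p}))
    (hw : w ∈ convexHull ℝ (closedBall (0 : E) 1 ∪ {p, -p}))
    (hfz : ‖p‖ - r ≤ f z) (hfw : ‖p‖ - r ≤ f w) :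
    dist z w ≤ r / (‖p‖ - 1) * (1 + ‖p‖) := by
  obtain ⟨u, t, hu, ht, hzp⟩ := exists_sub_eq_sub_smul_of_mem_convexHull_of_le_apply hf hfp hz hfz
  obtain ⟨u', t', hu', ht', hwp⟩ :=
    exists_sub_eq_sub_smul_of_mem_convexHull_of_le_apply hf hfp hw hfw
  have hp₁ : 0 < ‖p‖ - 1 := sub_pos.2 hp
  rw [dist_eq_norm, ← sub_sub_sub_cancel_right z w p, hzp, hwp]
  exact norm_sub_sub_smul_sub_le hp.le hu hu' ((le_div_iff₀ hp₁).2 ht) ((le_div_iff₀ hp₁).2 ht')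

end

theorem diam_slice_of_Bdelta_general
    (X : Type*) [NormedAddCommGroup X] [NormedSpace ℝ X]
    (x₀ : X) (hx₀ : ‖x₀‖ = 1) (f : StrongDual ℝ X) (hf : ‖f‖ = 1) (hfx₀ : f x₀ = 1)
    (δ : ℝ) (hδ : 0 < δ) (r : ℝ) (hr : 0 < r) :
    Metric.diam {z ∈ Bdelta x₀ δ | f z > 1 + δ - r} ≤ 3 * r * (1 + δ) / δ := by
  set p : X := (1 + δ) • x₀
  have hp : ‖p‖ = 1 + δ := by
    rw [norm_smul, hx₀, Real.norm_of_nonneg (by linarith), mul_one]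
  have hfp : f p = ‖p‖ := by rw [hp, map_smul, hfx₀, smul_eq_mul, mul_one]
  have hslice : {z ∈ Bdelta x₀ δ | f z > 1 + δ - r} ⊆
      closure ({z | 1 + δ - r < f z} ∩ convexHull ℝ (closedBall (0 : X) 1 ∪ {p, -p})) :=
    fun z hz => (isOpen_lt continuous_const f.continuous).inter_closure ⟨hz.2, hz.1⟩
  refine Metric.diam_le_of_subset_closure hslice (by positivity) ?_
  rintro z ⟨hfz, hz⟩ w ⟨hfw, hw⟩
  calc dist z w ≤ r / (‖p‖ - 1) * (1 + ‖p‖) :=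
        dist_le_of_mem_convexHull_of_le_apply (by linarith) hf.le hfp hz hw
          (by rw [hp]; exact hfz.le) (by rw [hp]; exact hfw.le)
    _ ≤ 3 * r * (1 + δ) / δ := by
      rw [hp, add_sub_cancel_left, div_mul_eq_mul_div]
      exact div_le_div_of_nonneg_right (by nlinarith) hδ.le

/-- With `x₀ ∈ S_X`, `f ∈ S_{X*}`, `f(x₀) = 1`, `δ > 0` and
`B_δ = co(B_X ∪ {±(1+δ)x₀})`: for every `0 < r < δ`, the set
`{z ∈ B_δ : f(z) > 1 + δ - r}` has diameter at most `3r(1+δ)/δ`. -/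
theorem diam_slice_of_Bdelta
    (X : Type*) [NormedAddCommGroup X] [NormedSpace ℝ X] [CompleteSpace X]
    (x₀ : X) (hx₀ : ‖x₀‖ = 1) (f : StrongDual ℝ X) (hf : ‖f‖ = 1) (hfx₀ : f x₀ = 1)
    (δ : ℝ) (hδ : 0 < δ) (r : ℝ) (hr : 0 < r) (hrδ : r < δ) :
    Metric.diam {z ∈ Bdelta x₀ δ | f z > 1 + δ - r} ≤ 3 * r * (1 + δ) / δ :=
  diam_slice_of_Bdelta_general X x₀ hx₀ f hf hfx₀ δ hδ r hr
end

section
/- Let X be a Banach space, x_0 ∈ S_X, f ∈ S_{X*} with f(x_0) = 1, δ, ε > 0, B_δ := closed convex hull of B_X ∪ {±(1+δ)x_0}, and C_ε := B_X + εB_δ with associated Minkowski norm |·|_ε. Then for every 0 < r < min{ε, δ}, the slice {z ∈ C_ε : f(z) > 1 + ε(1+δ) - r} is contained in the |·|_ε-ball of center ε(1+δ)x_0 and radius 1/(1+ε) + 3r(1+δ)/δ. -/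
/-!
Write `z ∈ C_ε` as `z = x + ε y` with `x ∈ B_X`, `y ∈ B_δ`. Since `f ≤ 1` on `B_X`, a point of the
slice has `ε (1 + δ - f y) < r`. The function `y ↦ δ ‖y - (1+δ)x₀‖ + (2+δ) f y` is convex and
continuous and is at most `(2+δ)(1+δ)` on the generators `B_X ∪ {±(1+δ)x₀}`, hence on all of
`B_δ`; so `ε ‖y - (1+δ)x₀‖ < (2+δ) r / δ`. Finally `|·|_ε` is subadditive, `|x|_ε ≤ 1/(1+ε)`
because `(1+ε)x ∈ B_X + εB_X ⊆ C_ε`, and `|·|_ε ≤ ‖·‖` because `B_X ⊆ C_ε`.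
-/

open NormedSpace Metric
open scoped Pointwise

/-- `C_ε := B_X + ε B_δ`. -/
noncomputable def Ceps {X : Type*} [NormedAddCommGroup X] [NormedSpace ℝ X]
    (x₀ : X) (δ ε : ℝ) : Set X :=
  Metric.closedBall (0 : X) 1 + ε • Bdelta x₀ δ

section

variable {X : Type*} [NormedAddCommGroup X] [NormedSpace ℝ X] {x₀ : X} {δ ε : ℝ}

theorem apply_le_one_of_norm_le_one {f : StrongDual ℝ X} (hf : ‖f‖ ≤ 1) {x : X} (hx : ‖x‖ ≤ 1) :
    f x ≤ 1 :=
  (le_abs_self _).trans (by simpa using f.le_of_opNorm_le_of_le hf hx)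

theorem convex_Bdelta : Convex ℝ (Bdelta x₀ δ) :=
  (convex_convexHull ℝ _).closure

theorem closedBall_subset_Bdelta : closedBall (0 : X) 1 ⊆ Bdelta x₀ δ :=
  fun _ hy => subset_closure (subset_convexHull ℝ _ (Or.inl hy))

theorem le_of_mem_Bdelta {φ : X → ℝ} {a : ℝ} (hφ : ConvexOn ℝ Set.univ φ) (hφc : Continuous φ)
    (hball : ∀ y ∈ closedBall (0 : X) 1, φ y ≤ a) (hpos : φ ((1 + δ) • x₀) ≤ a)
    (hneg : φ (-((1 + δ) • x₀)) ≤ a) {y : X} (hy : y ∈ Bdelta x₀ δ) : φ y ≤ a := by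
  have hconv : Convex ℝ {y | φ y ≤ a} := by
    simpa only [Set.mem_univ, true_and] using hφ.convex_le a
  have hgen : closedBall (0 : X) 1 ∪ {(1 + δ) • x₀, -((1 + δ) • x₀)} ⊆ {y | φ y ≤ a} := by
    rintro y (hy | rfl | rfl)
    exacts [hball y hy, hpos, hneg]
  exact closure_minimal (convexHull_min hgen hconv) (isClosed_le hφc continuous_const) hy

theorem mul_norm_sub_le_of_mem_Bdelta (hx₀ : ‖x₀‖ ≤ 1) {f : StrongDual ℝ X} (hf : ‖f‖ ≤ 1)
    (hfx₀ : f x₀ = 1) (hδ : 0 < δ) {y : X} (hy : y ∈ Bdelta x₀ δ) :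
    δ * ‖y - (1 + δ) • x₀‖ ≤ (2 + δ) * (1 + δ - f y) := by
  set p := (1 + δ) • x₀
  have hp : ‖p‖ ≤ 1 + δ := by
    rw [norm_smul, Real.norm_of_nonneg (by linarith)]
    exact mul_le_of_le_one_right (by linarith) hx₀
  have hfp : f p = 1 + δ := by simp [p, hfx₀]
  let φ : X → ℝ := fun y => δ * dist y p + (2 + δ) * f y
  have hφ : ConvexOn ℝ Set.univ φ :=
    ((convexOn_dist p convex_univ).smul hδ.le).add
      (((2 + δ) • f).toLinearMap.convexOn convex_univ)
  have hφc : Continuous φ := by fun_prop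
  suffices φ y ≤ (2 + δ) * (1 + δ) by
    simp only [φ, dist_eq_norm] at this
    linarith
  refine le_of_mem_Bdelta hφ hφc (fun u hu => ?_) ?_ ?_ hy
  · rw [mem_closedBall_zero_iff] at hu
    have hdist : dist u p ≤ 2 + δ := by
      rw [dist_eq_norm]
      linarith [norm_sub_le u p]
    have hfu := apply_le_one_of_norm_le_one hf hu
    simp only [φ]
    nlinarith
  · show φ p ≤ _
    simp [φ, hfp]
  · show φ (-p) ≤ _
    have hdist : dist (-p) p = 2 * ‖p‖ := by
      rw [dist_eq_norm, ← neg_add', norm_neg, ← two_smul ℝ, norm_smul, Real.norm_two]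
    simp only [φ, hdist, map_neg, hfp]
    nlinarith

theorem mem_Ceps_iff {z : X} :
    z ∈ Ceps x₀ δ ε ↔ ∃ x ∈ closedBall (0 : X) 1, ∃ y ∈ Bdelta x₀ δ, x + ε • y = z := by
  simp only [Ceps, Set.mem_add, Set.mem_smul_set]
  constructor
  · rintro ⟨x, hx, _, ⟨y, hy, rfl⟩, rfl⟩
    exact ⟨x, hx, y, hy, rfl⟩
  · rintro ⟨x, hx, y, hy, rfl⟩
    exact ⟨x, hx, _, ⟨y, hy, rfl⟩, rfl⟩

theorem closedBall_subset_Ceps : closedBall (0 : X) 1 ⊆ Ceps x₀ δ ε :=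
  fun x hx => mem_Ceps_iff.2
    ⟨x, hx, 0, closedBall_subset_Bdelta (mem_closedBall_self zero_le_one), by simp⟩

theorem convex_Ceps : Convex ℝ (Ceps x₀ δ ε) :=
  (convex_closedBall _ _).add (convex_Bdelta.smul ε)

theorem absorbent_Ceps : Absorbent ℝ (Ceps x₀ δ ε) :=
  (absorbent_ball_zero one_pos).mono (ball_subset_closedBall.trans closedBall_subset_Ceps)

theorem gauge_Ceps_le_norm (z : X) : gauge (Ceps x₀ δ ε) z ≤ ‖z‖ := by
  simpa using
    mul_gauge_le_norm (r := 1) (x := z) (ball_subset_closedBall.trans closedBall_subset_Ceps)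

theorem gauge_Ceps_le_of_norm_le_one (hε : 0 ≤ ε) {x : X} (hx : ‖x‖ ≤ 1) :
    gauge (Ceps x₀ δ ε) x ≤ 1 / (1 + ε) := by
  have hx' : x ∈ closedBall (0 : X) 1 := mem_closedBall_zero_iff.2 hx
  refine gauge_le_of_mem (by positivity) ⟨(1 + ε) • x, ?_, ?_⟩
  · exact mem_Ceps_iff.2 ⟨x, hx', x, closedBall_subset_Bdelta hx', by rw [add_smul, one_smul]⟩
  · simp only [smul_smul, one_div_mul_cancel (by positivity : (1 + ε) ≠ 0), one_smul]

end

theorem slice_of_Ceps_in_small_ball_general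
    (X : Type*) [NormedAddCommGroup X] [NormedSpace ℝ X]
    (x₀ : X) (hx₀ : ‖x₀‖ = 1) (f : StrongDual ℝ X) (hf : ‖f‖ = 1) (hfx₀ : f x₀ = 1)
    (δ ε : ℝ) (hδ : 0 < δ) (hε : 0 < ε)
    (r : ℝ) (hr : 0 < r) :
    {z ∈ Ceps x₀ δ ε | f z > 1 + ε * (1 + δ) - r} ⊆
      {z : X | gauge (Ceps x₀ δ ε) (z - (ε * (1 + δ)) • x₀) ≤
        1 / (1 + ε) + 3 * r * (1 + δ) / δ} := by
  rintro z ⟨hzC, hzf⟩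
  obtain ⟨x, hx, y, hy, rfl⟩ := mem_Ceps_iff.1 hzC
  rw [mem_closedBall_zero_iff] at hx
  have hfx := apply_le_one_of_norm_le_one hf.le hx
  have hfy : ε * (1 + δ - f y) < r := by
    simp only [map_add, map_smul, smul_eq_mul] at hzf
    linarith
  have hcone := mul_norm_sub_le_of_mem_Bdelta hx₀.le hf.le hfx₀ hδ hy
  have hnear : ε * ‖y - (1 + δ) • x₀‖ ≤ 3 * r * (1 + δ) / δ := by
    rw [le_div_iff₀ hδ]
    nlinarith
  have hdec : x + ε • y - (ε * (1 + δ)) • x₀ = x + ε • (y - (1 + δ) • x₀) := by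
    rw [smul_sub, smul_smul, add_sub_assoc]
  calc gauge (Ceps x₀ δ ε) (x + ε • y - (ε * (1 + δ)) • x₀)
      ≤ gauge (Ceps x₀ δ ε) x + gauge (Ceps x₀ δ ε) (ε • (y - (1 + δ) • x₀)) :=
        hdec ▸ gauge_add_le convex_Ceps absorbent_Ceps _ _
    _ ≤ 1 / (1 + ε) + ε * ‖y - (1 + δ) • x₀‖ := by
        gcongr
        · exact gauge_Ceps_le_of_norm_le_one hε.le hx
        · simpa [norm_smul, abs_of_pos hε] using gauge_Ceps_le_norm (ε • (y - (1 + δ) • x₀))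
    _ ≤ 1 / (1 + ε) + 3 * r * (1 + δ) / δ := by gcongr

/-- With `x₀ ∈ S_X`, `f ∈ S_{X*}`, `f(x₀) = 1`, `δ, ε > 0`,
`B_δ = co(B_X ∪ {±(1+δ)x₀})`, `C_ε = B_X + εB_δ` and `|·|_ε = gauge C_ε`:
for every `0 < r < min {ε, δ}`, the slice `{z ∈ C_ε : f z > 1 + ε(1+δ) - r}` is contained
in the `|·|_ε`-ball of center `ε(1+δ)x₀` and radius `1/(1+ε) + 3r(1+δ)/δ`. -/
theorem slice_of_Ceps_in_small_ball
    (X : Type*) [NormedAddCommGroup X] [NormedSpace ℝ X] [CompleteSpace X]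
    (x₀ : X) (hx₀ : ‖x₀‖ = 1) (f : StrongDual ℝ X) (hf : ‖f‖ = 1) (hfx₀ : f x₀ = 1)
    (δ ε : ℝ) (hδ : 0 < δ) (hε : 0 < ε)
    (r : ℝ) (hr : 0 < r) (hrε : r < ε) (hrδ : r < δ) :
    {z ∈ Ceps x₀ δ ε | f z > 1 + ε * (1 + δ) - r} ⊆
      {z : X | gauge (Ceps x₀ δ ε) (z - (ε * (1 + δ)) • x₀) ≤
        1 / (1 + ε) + 3 * r * (1 + δ) / δ} :=
  slice_of_Ceps_in_small_ball_general X x₀ hx₀ f hf hfx₀ δ ε hδ hε r hr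
end
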